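/- Let (g = U ⊕ V, B) be a Manin algebra over a field K of characteristic 0. Then there exists a symplectic structure ω on g with ω(U,U) = ω(V,V) = {0} (i.e. (g = U ⊕ V, B) is a special symplectic Manin algebra) if and only if there exists an invertible derivation D of g, skew-symmetric with respect to B, such that D(U) ⊆ U and D(V) ⊆ V. -/

import Mathlib

/-!
Via the nondegenerate form `B`, bilinear forms `ω` on `g` correspond to endomorphisms `D` through
`ω(x, y) = B(Dx, y)`. Under this correspondence `ω` is nondegenerate iff `D` is bijective, and
(in characteristic `≠ 2`) alternating iff `D` is `B`-skew. For `B`-skew `D` and invariant `B`,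
`B(D[x,y] - [Dx,y] - [x,Dy], z)` is exactly the cyclic sum in the cocycle condition, so `ω` is
closed iff `D` is a derivation. Finally, complementary isotropic subspaces `U`, `V` are Lagrangian,
`U^⊥ = U`, so `ω(U, U) = 0` iff `D(U) ⊆ U`.
-/

open LinearMap (BilinForm)

namespace LinearMap.BilinForm

section Lagrangian

variable {R M : Type*} [CommRing R] [AddCommGroup M] [Module R M] {B : BilinForm R M}
  {U V : Submodule R M}

theorem mem_of_forall_apply_eq_zero_of_isCompl (hB : B.SeparatingLeft) (hUV : IsCompl U V)
    (hU : ∀ x ∈ U, ∀ y ∈ U, B x y = 0) (hV : ∀ x ∈ V, ∀ y ∈ V, B x y = 0) {x : M}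
    (hx : ∀ y ∈ U, B x y = 0) : x ∈ U := by
  obtain ⟨u, v, hu, hv, rfl⟩ := Submodule.codisjoint_iff_exists_add_eq.1 hUV.codisjoint x
  suffices v = 0 by simpa [this] using hu
  refine hB v fun z ↦ ?_
  obtain ⟨u', v', hu', hv', rfl⟩ := Submodule.codisjoint_iff_exists_add_eq.1 hUV.codisjoint z
  have hvu' : B v u' = 0 := by simpa [hU u hu u' hu'] using hx u' hu'
  simp [hvu', hV v hv v' hv']

theorem mapsTo_iff_of_isCompl (hB : B.SeparatingLeft) (hUV : IsCompl U V)
    (hU : ∀ x ∈ U, ∀ y ∈ U, B x y = 0) (hV : ∀ x ∈ V, ∀ y ∈ V, B x y = 0) (D : M →ₗ[R] M) :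
    (∀ x ∈ U, ∀ y ∈ U, (B ∘ₗ D) x y = 0) ↔ ∀ x ∈ U, D x ∈ U :=
  ⟨fun h x hx ↦ mem_of_forall_apply_eq_zero_of_isCompl hB hUV hU hV (h x hx),
    fun h x hx ↦ hU (D x) (h x hx)⟩

end Lagrangian

theorem isAlt_comp_iff {R M : Type*} [CommRing R] [NoZeroDivisors R] [CharZero R]
    [AddCommGroup M] [Module R M] {B : BilinForm R M} (hB : ∀ x y, B x y = B y x)
    {D : M →ₗ[R] M} : (B ∘ₗ D).IsAlt ↔ ∀ x y, B (D x) y = -B x (D y) := by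
  rw [LinearMap.isAlt_iff_eq_neg_flip, LinearMap.ext_iff₂]
  refine forall₂_congr fun x y ↦ ?_
  simp only [LinearMap.neg_apply, LinearMap.flip_apply, LinearMap.comp_apply]
  rw [hB (D y) x]

section FiniteDimensional

variable {K V : Type*} [Field K] [AddCommGroup V] [Module K V] [FiniteDimensional K V]
  {B : BilinForm K V}

theorem exists_comp_eq (hB : B.Nondegenerate) (ω : BilinForm K V) :
    ∃ D : V →ₗ[K] V, B ∘ₗ D = ω :=
  ⟨(B.toDual hB).symm ∘ₗ ω, by ext; simp⟩

theorem nondegenerate_comp_iff (hB : B.Nondegenerate) {D : V →ₗ[K] V} :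
    (B ∘ₗ D).Nondegenerate ↔ Function.Bijective D := by
  refine ⟨fun h ↦ ?_, fun hD ↦ ⟨fun x hx ↦ ?_, fun y hy ↦ hB.2 y fun z ↦ ?_⟩⟩
  · have hinj : Function.Injective D :=
      (injective_iff_map_eq_zero D).2 fun x hx ↦ h.1 x fun y ↦ by simp [hx]
    exact ⟨hinj, LinearMap.injective_iff_surjective.1 hinj⟩
  · exact hD.1 <| (hB.1 (D x) hx).trans (map_zero D).symm
  · obtain ⟨x, rfl⟩ := hD.2 z
    exact hy x

end FiniteDimensional

section LieAlgebra

variable {R L : Type*} [CommRing R] [LieRing L] [LieAlgebra R L] {B : BilinForm R L}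
  {D : L →ₗ[R] L}

theorem cyclic_sum_comp_lie_eq (hBsymm : ∀ x y, B x y = B y x)
    (hBinv : ∀ x y z, B ⁅x, y⁆ z = B x ⁅y, z⁆) (hD : ∀ x y, B (D x) y = -B x (D y))
    (x y z : L) :
    B (D ⁅x, y⁆) z + B (D ⁅y, z⁆) x + B (D ⁅z, x⁆) y =
      B (D ⁅x, y⁆ - ⁅D x, y⁆ - ⁅x, D y⁆) z := by
  have h₁ : B ⁅D x, y⁆ z = -B (D ⁅y, z⁆) x := by rw [hBinv, hD, hBsymm]
  have h₂ : B ⁅x, D y⁆ z = -B (D ⁅z, x⁆) y := by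
    rw [← lie_skew x (D y), map_neg, LinearMap.neg_apply, hBinv, ← lie_skew x z, map_neg, neg_neg,
      hD, hBsymm y]
  simp only [map_sub, LinearMap.sub_apply, h₁, h₂]
  ring

theorem cocycle_comp_iff (hB : B.SeparatingLeft) (hBsymm : ∀ x y, B x y = B y x)
    (hBinv : ∀ x y z, B ⁅x, y⁆ z = B x ⁅y, z⁆) (hD : ∀ x y, B (D x) y = -B x (D y)) :
    (∀ x y z, (B ∘ₗ D) ⁅x, y⁆ z + (B ∘ₗ D) ⁅y, z⁆ x + (B ∘ₗ D) ⁅z, x⁆ y = 0) ↔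
      ∀ x y, D ⁅x, y⁆ = ⁅D x, y⁆ + ⁅x, D y⁆ := by
  simp only [LinearMap.comp_apply, cyclic_sum_comp_lie_eq hBsymm hBinv hD, sub_sub]
  refine forall₂_congr fun x y ↦ ⟨fun h ↦ sub_eq_zero.1 (hB _ h), fun h z ↦ ?_⟩
  rw [h, sub_self, map_zero, LinearMap.zero_apply]

end LieAlgebra

end LinearMap.BilinForm

open LinearMap.BilinForm

/-- A Manin algebra `(g = U ⊕ V, B)` is special symplectic (it has a symplectic structure `ω`
with `ω(U,U) = ω(V,V) = 0`) if and only if there is an invertible derivation `D` of `g`,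
skew-symmetric with respect to `B`, with `D(U) ⊆ U` and `D(V) ⊆ V`. -/
theorem stmt_16 (K : Type*) [Field K] [CharZero K]
    (g : Type*) [LieRing g] [LieAlgebra K g] [Module.Finite K g]
    (B : LinearMap.BilinForm K g)
    (hBnd : B.Nondegenerate)
    (hBsymm : ∀ x y : g, B x y = B y x)
    (hBinv : ∀ x y z : g, B ⁅x, y⁆ z = B x ⁅y, z⁆)
    (U V : LieSubalgebra K g)
    (hUV : IsCompl U.toSubmodule V.toSubmodule)
    (hUiso : ∀ x ∈ U, ∀ y ∈ U, B x y = 0)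
    (hViso : ∀ x ∈ V, ∀ y ∈ V, B x y = 0) :
    (∃ ω : LinearMap.BilinForm K g, ω.Nondegenerate ∧ (∀ x : g, ω x x = 0) ∧
      (∀ x y z : g, ω ⁅x, y⁆ z + ω ⁅y, z⁆ x + ω ⁅z, x⁆ y = 0) ∧
      (∀ x ∈ U, ∀ y ∈ U, ω x y = 0) ∧ (∀ x ∈ V, ∀ y ∈ V, ω x y = 0)) ↔
    (∃ D : g →ₗ[K] g, Function.Bijective D ∧
      (∀ x y : g, D ⁅x, y⁆ = ⁅D x, y⁆ + ⁅x, D y⁆) ∧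
      (∀ x y : g, B (D x) y = - B x (D y)) ∧
      (∀ x ∈ U, D x ∈ U) ∧ (∀ x ∈ V, D x ∈ V)) := by
  have hU := mapsTo_iff_of_isCompl (U := U.toSubmodule) hBnd.1 hUV hUiso hViso
  have hV := mapsTo_iff_of_isCompl (U := V.toSubmodule) hBnd.1 hUV.symm hViso hUiso
  constructor
  · rintro ⟨ω, hnd, halt, hcocycle, hωU, hωV⟩
    obtain ⟨D, rfl⟩ := exists_comp_eq hBnd ω
    have hskew := (isAlt_comp_iff hBsymm).1 halt
    exact ⟨D, (nondegenerate_comp_iff hBnd).1 hnd,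
      (cocycle_comp_iff hBnd.1 hBsymm hBinv hskew).1 hcocycle, hskew,
      (hU D).1 hωU, (hV D).1 hωV⟩
  · rintro ⟨D, hbij, hder, hskew, hDU, hDV⟩
    exact ⟨B ∘ₗ D, (nondegenerate_comp_iff hBnd).2 hbij, (isAlt_comp_iff hBsymm).2 hskew,
      (cocycle_comp_iff hBnd.1 hBsymm hBinv hskew).2 hder, (hU D).2 hDU, (hV D).2 hDV⟩
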